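/- For ω ∈ (−1,1), let φ_ω(x) = √(2(1−ω²)) · sech(√(1−ω²)·x) and φ₀ = φ_{ω=0}. Then the energy of the standing-wave state admits the closed form E(Φ_ω) := ½(1+ω²)·∫φ_ω² + ½∫(φ_ω')² − ¼∫φ_ω⁴ = ((1+2ω²)·√(1−ω²)/3) · ∫φ₀². -/

import Mathlib

/-! With `k = √(1 - ω²)` the soliton is `φ_ω(x) = √2 k sech(k x)`. Scaling `x ↦ k x` and substituting
`t = tanh x`, `dt = sech² x dx`, turns every integral in the energy into a polynomial integral over
`[-1, 1]`: `∫ φ_ω² = 4k`, `∫ φ_ω'² = 4k³/3` and `∫ φ_ω⁴ = 16k³/3`. Since `k² = 1 - ω²`, the energy is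
`2(1 + ω²)k - 2k³/3 = (4/3)(1 + 2ω²)k`, and `∫ φ₀² = 4`. -/

open Real Set MeasureTheory

/-- The ground-state soliton of the KGZ standing-wave equation. -/
noncomputable def phiSol (ω : ℝ) (x : ℝ) : ℝ :=
  Real.sqrt (2 * (1 - ω ^ 2)) * (1 / Real.cosh (Real.sqrt (1 - ω ^ 2) * x))

open Filter Topology

namespace Real

theorem hasDerivAt_tanh (x : ℝ) : HasDerivAt tanh (cosh x ^ 2)⁻¹ x := by
  have h := (hasDerivAt_sinh x).div (hasDerivAt_cosh x) (cosh_pos x).ne'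
  rw [show sinh / cosh = tanh from funext fun y => (tanh_eq_sinh_div_cosh y).symm] at h
  refine h.congr_deriv ?_
  rw [← sq, ← sq, cosh_sq_sub_sinh_sq, one_div]

theorem continuous_tanh : Continuous tanh :=
  continuous_iff_continuousAt.2 fun x => (hasDerivAt_tanh x).continuousAt

theorem tanh_eq_one_sub_exp_div_one_add_exp (x : ℝ) :
    tanh x = (1 - exp (-2 * x)) / (1 + exp (-2 * x)) := by
  have h : exp (-2 * x) = exp (-x) / exp x := by rw [← exp_sub]; ring_nf
  rw [tanh_eq, h]
  field_simp

theorem tendsto_tanh_atTop : Tendsto tanh atTop (𝓝 1) := by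
  have hexp : Tendsto (fun x : ℝ => exp (-2 * x)) atTop (𝓝 0) :=
    tendsto_exp_atBot.comp (tendsto_id.const_mul_atTop_of_neg (by norm_num))
  have h : Tendsto (fun x => (1 - exp (-2 * x)) / (1 + exp (-2 * x))) atTop
      (𝓝 ((1 - 0) / (1 + 0))) :=
    (tendsto_const_nhds.sub hexp).div (tendsto_const_nhds.add hexp) (by norm_num)
  rw [sub_zero, add_zero, div_one] at h
  exact h.congr fun x => (tanh_eq_one_sub_exp_div_one_add_exp x).symm

theorem tendsto_tanh_atBot : Tendsto tanh atBot (𝓝 (-1)) := by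
  have := (tendsto_tanh_atTop.comp tendsto_neg_atBot_atTop).neg
  simpa [Function.comp_def, tanh_neg] using this

theorem inv_cosh_sq_le_inv_one_add_sq (x : ℝ) : (cosh x ^ 2)⁻¹ ≤ (1 + x ^ 2)⁻¹ := by
  have h : |x| ≤ |sinh x| := by rw [abs_sinh]; exact self_le_sinh_iff.2 (abs_nonneg x)
  rw [cosh_sq, add_comm]
  gcongr ?_⁻¹
  exact add_le_add_right (sq_le_sq.2 h) 1

theorem integrable_inv_cosh_sq : Integrable fun x : ℝ => (cosh x ^ 2)⁻¹ :=
  integrable_inv_one_add_sq.mono' (by fun_prop) (ae_of_all _ fun x => by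
    rw [Real.norm_of_nonneg (by positivity)]; exact inv_cosh_sq_le_inv_one_add_sq x)

theorem integral_comp_tanh_div_cosh_sq {g : ℝ → ℝ} (hg : Continuous g) :
    ∫ x, g (tanh x) / cosh x ^ 2 = ∫ t in (-1)..1, g t := by
  let G : ℝ → ℝ := fun t => ∫ s in (0 : ℝ)..t, g s
  have hG' (t : ℝ) : HasDerivAt G (g t) t := (hg.integral_hasStrictDerivAt 0 t).hasDerivAt
  have hG : Continuous G := continuous_iff_continuousAt.2 fun t => (hG' t).continuousAt
  have hderiv (x : ℝ) : HasDerivAt (G ∘ tanh) (g (tanh x) / cosh x ^ 2) x :=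
    (hG' (tanh x)).comp x (hasDerivAt_tanh x)
  obtain ⟨C, hC⟩ := (isCompact_Icc (a := (-1 : ℝ)) (b := 1)).exists_bound_of_continuousOn
    hg.continuousOn
  have hint : Integrable fun x => g (tanh x) / cosh x ^ 2 := by
    simp_rw [div_eq_mul_inv]
    exact integrable_inv_cosh_sq.bdd_mul (hg.comp continuous_tanh).aestronglyMeasurable
      (ae_of_all _ fun x => hC _ ⟨(neg_one_lt_tanh x).le, (tanh_lt_one x).le⟩)
  rw [integral_of_hasDerivAt_of_tendsto hderiv hint
    ((hG.tendsto _).comp tendsto_tanh_atBot) ((hG.tendsto _).comp tendsto_tanh_atTop),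
    intervalIntegral.integral_interval_sub_left (hg.intervalIntegrable _ _)
      (hg.intervalIntegrable _ _)]

theorem integral_comp_tanh_mul_div_cosh_sq {g : ℝ → ℝ} (hg : Continuous g) (k : ℝ) :
    ∫ x, g (tanh (k * x)) / cosh (k * x) ^ 2 = |k|⁻¹ * ∫ t in (-1)..1, g t := by
  rw [Measure.integral_comp_mul_left (fun x => g (tanh x) / cosh x ^ 2) k,
    integral_comp_tanh_div_cosh_sq hg, abs_inv, smul_eq_mul]

end Real

section
variable (ω : ℝ)

theorem phiSol_eq (x : ℝ) :
    phiSol ω x = √2 * √(1 - ω ^ 2) / cosh (√(1 - ω ^ 2) * x) := by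
  rw [phiSol, sqrt_mul zero_le_two, mul_one_div]

theorem hasDerivAt_phiSol (x : ℝ) :
    HasDerivAt (phiSol ω)
      (-(√2 * √(1 - ω ^ 2) ^ 2 * sinh (√(1 - ω ^ 2) * x)) / cosh (√(1 - ω ^ 2) * x) ^ 2) x := by
  set k := √(1 - ω ^ 2)
  have hfun : phiSol ω = fun y => √2 * k * (cosh (k * y))⁻¹ :=
    funext fun y => by rw [phiSol_eq, div_eq_mul_inv]
  have h := (((hasDerivAt_id' x).const_mul k).cosh.inv (cosh_pos _).ne').const_mul (√2 * k)
  rw [hfun]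
  exact h.congr_deriv (by ring)

theorem phiSol_sq (x : ℝ) :
    phiSol ω x ^ 2 = 2 * √(1 - ω ^ 2) ^ 2 / cosh (√(1 - ω ^ 2) * x) ^ 2 := by
  rw [phiSol_eq, div_pow, mul_pow, sq_sqrt zero_le_two]

theorem phiSol_pow_four (x : ℝ) :
    phiSol ω x ^ 4 = 4 * √(1 - ω ^ 2) ^ 4 * (1 - tanh (√(1 - ω ^ 2) * x) ^ 2)
      / cosh (√(1 - ω ^ 2) * x) ^ 2 := by
  have hc := (cosh_pos (√(1 - ω ^ 2) * x)).ne'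
  rw [show phiSol ω x ^ 4 = (phiSol ω x ^ 2) ^ 2 by ring, phiSol_sq, tanh_eq_sinh_div_cosh]
  field_simp
  linear_combination (-4 * √(1 - ω ^ 2) ^ 4) * cosh_sq_sub_sinh_sq (√(1 - ω ^ 2) * x)

theorem deriv_phiSol_sq (x : ℝ) :
    deriv (phiSol ω) x ^ 2 = 2 * √(1 - ω ^ 2) ^ 4 * tanh (√(1 - ω ^ 2) * x) ^ 2
      / cosh (√(1 - ω ^ 2) * x) ^ 2 := by
  have hc := (cosh_pos (√(1 - ω ^ 2) * x)).ne'
  rw [(hasDerivAt_phiSol ω x).deriv, tanh_eq_sinh_div_cosh]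
  field_simp
  rw [sq_sqrt zero_le_two]
  ring

variable {ω : ℝ} (hω : ω ∈ Ioo (-1 : ℝ) 1)
include hω

theorem one_sub_sq_pos_of_mem_Ioo : 0 < 1 - ω ^ 2 := by
  rw [sub_pos, sq_lt_one_iff_abs_lt_one, abs_lt]
  exact hω

theorem integral_phiSol_sq : ∫ x, phiSol ω x ^ 2 = 4 * √(1 - ω ^ 2) := by
  have hk := sqrt_pos.2 (one_sub_sq_pos_of_mem_Ioo hω)
  simp_rw [phiSol_sq, integral_comp_tanh_mul_div_cosh_sq (g := fun _ => 2 * √(1 - ω ^ 2) ^ 2)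
    continuous_const, abs_of_pos hk]
  field_simp
  norm_num

theorem integral_phiSol_pow_four : ∫ x, phiSol ω x ^ 4 = 16 * √(1 - ω ^ 2) ^ 3 / 3 := by
  have hk := sqrt_pos.2 (one_sub_sq_pos_of_mem_Ioo hω)
  simp_rw [phiSol_pow_four, integral_comp_tanh_mul_div_cosh_sq
    (g := fun t => 4 * √(1 - ω ^ 2) ^ 4 * (1 - t ^ 2)) (by fun_prop), abs_of_pos hk]
  field_simp
  norm_num [integral_pow]
  ring

theorem integral_deriv_phiSol_sq : ∫ x, deriv (phiSol ω) x ^ 2 = 4 * √(1 - ω ^ 2) ^ 3 / 3 := by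
  have hk := sqrt_pos.2 (one_sub_sq_pos_of_mem_Ioo hω)
  simp_rw [deriv_phiSol_sq, integral_comp_tanh_mul_div_cosh_sq
    (g := fun t => 2 * √(1 - ω ^ 2) ^ 4 * t ^ 2) (by fun_prop), abs_of_pos hk]
  field_simp
  norm_num [integral_pow]
  ring

end

/-- For `ω ∈ (-1,1)`, the energy of the standing-wave state has the closed form
`E(Φ_ω) = ½(1+ω²)∫φ_ω² + ½∫(φ_ω')² - ¼∫φ_ω⁴ = ((1+2ω²)√(1-ω²)/3)∫φ₀²`. -/
theorem energy_closed_form (ω : ℝ) (hω : ω ∈ Ioo (-1 : ℝ) 1) :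
    (1 / 2) * (1 + ω ^ 2) * (∫ x : ℝ, (phiSol ω x) ^ 2)
      + (1 / 2) * (∫ x : ℝ, (deriv (phiSol ω) x) ^ 2)
      - (1 / 4) * (∫ x : ℝ, (phiSol ω x) ^ 4)
    = ((1 + 2 * ω ^ 2) * Real.sqrt (1 - ω ^ 2) / 3) * (∫ x : ℝ, (phiSol 0 x) ^ 2) := by
  have hk2 : √(1 - ω ^ 2) ^ 2 = 1 - ω ^ 2 := sq_sqrt (one_sub_sq_pos_of_mem_Ioo hω).le
  rw [integral_phiSol_sq hω, integral_deriv_phiSol_sq hω, integral_phiSol_pow_four hω,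
    integral_phiSol_sq (by norm_num)]
  simp only [zero_pow two_ne_zero, sub_zero, sqrt_one]
  linear_combination (-(2 : ℝ) * √(1 - ω ^ 2) / 3) * hk2
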